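/- Sequential cooperation inclusion for Demon: For all hybrid games α, β and all sets of states X, Y ⊆ S, it holds (for the one-argument zero-sum dGL winning regions) that δ_α(ς_{β^{-d}}(X ∩ Y) ∪ δ_β(Y)) ∩ (δ_α(δ_β(Y)))ᶜ ⊆ ς_{α^{-d}}(ς_{β^{-d}}(X ∩ Y)). In words: if Demon can win α into the region where either the coalition can win β for X ∩ Y or he can win β for Y alone, but he cannot win α into the region where he can win β for Y alone, then the coalition can win α^{-d} into the region where the coalition can win β^{-d} for X ∩ Y. -/
import Mathlib


open Set

/-- Hybrid games over a variable set `V`. Terms/ODE right-hand sides are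
interpreted as functions from states `V → ℝ` to `ℝ`; tests and evolution
domain constraints are sets of states. -/
inductive Game (V : Type*) where
  | assign (x : V) (e : (V → ℝ) → ℝ)
  | ode (x : V) (f : (V → ℝ) → ℝ) (Q : Set (V → ℝ))
  | test (Q : Set (V → ℝ))
  | choice (a b : Game V)
  | seq (a b : Game V)
  | dual (a : Game V)
  | star (a : Game V)

variable {V : Type*} [DecidableEq V]

/-- `φ : ℝ → (V → ℝ)` (restricted to `[0,r]`) is a solution of `x' = f(x) & Q`
of duration `r ≥ 0`: `t ↦ φ t x` is differentiable with derivative `f (φ s)`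
at each `s ∈ [0,r]`, `φ s ∈ Q` on `[0,r]`, and all other variables stay
constant along `φ`. -/
def IsSolution (x : V) (f : (V → ℝ) → ℝ) (Q : Set (V → ℝ)) (r : ℝ)
    (φ : ℝ → (V → ℝ)) : Prop :=
  0 ≤ r ∧
  (∀ s ∈ Set.Icc 0 r, HasDerivAt (fun t => φ t x) (f (φ s)) s) ∧
  (∀ s ∈ Set.Icc 0 r, φ s ∈ Q) ∧
  (∀ s ∈ Set.Icc 0 r, ∀ y, y ≠ x → φ s y = φ 0 y)

mutual
/-- Angel's semi-competitive winning region ς_α(X,Y). -/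
def angel : Game V → Set (V → ℝ) → Set (V → ℝ) → Set (V → ℝ)
  | .assign x e, X, _ => {ω | Function.update ω x (e ω) ∈ X}
  | .ode x f Q, X, _ =>
      {ω | ∃ r φ, IsSolution x f Q r φ ∧ φ 0 = ω ∧ φ r ∈ X}
  | .test Q, X, _ => Q ∩ X
  | .choice a b, X, Y => angel a X Y ∪ angel b X Y
  | .seq a b, X, Y => angel a (angel b X Y) (demon b X Y)
  | .dual a, X, Y => demon a Y X
  | .star a, X, Y =>
      ⋂₀ {Z | X ∪ angel a Z Zᶜ ⊆ Z} ∪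
      ⋂₀ {Z | (X ∩ Y) ∪ (angel a Z Z ∩ demon a Z Z) ⊆ Z}

/-- Demon's semi-competitive winning region δ_α(X,Y). -/
def demon : Game V → Set (V → ℝ) → Set (V → ℝ) → Set (V → ℝ)
  | .assign x e, _, Y => {ω | Function.update ω x (e ω) ∈ Y}
  | .ode x f Q, X, Y =>
      {ω | ∀ r φ, IsSolution x f Q r φ → φ 0 = ω → ∀ s ∈ Set.Icc 0 r, φ s ∈ Y} ∪
      {ω | ∃ r φ, IsSolution x f Q r φ ∧ φ 0 = ω ∧ ∃ s ∈ Set.Icc 0 r, φ s ∈ X ∩ Y}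
  | .test Q, _, Y => Qᶜ ∪ Y
  | .choice a b, X, Y =>
      (demon a X Y ∩ demon b X Y) ∪ (demon a X Y ∩ angel a X Y) ∪
      (demon b X Y ∩ angel b X Y)
  | .seq a b, X, Y => demon a (angel b X Y) (demon b X Y)
  | .dual a, X, Y => angel a Y X
  | .star a, X, Y =>
      ⋃₀ {Z | Z ⊆ Y ∩ demon a Zᶜ Z} ∪
      ⋂₀ {Z | (X ∩ Y) ∪ (angel a Z Z ∩ demon a Z Z) ⊆ Z}
end

/-- Angel's one-argument zero-sum dGL winning region ς_α(X). -/
def dglAngel : Game V → Set (V → ℝ) → Set (V → ℝ)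
  | .assign x e, X => {ω | Function.update ω x (e ω) ∈ X}
  | .ode x f Q, X => {ω | ∃ r φ, IsSolution x f Q r φ ∧ φ 0 = ω ∧ φ r ∈ X}
  | .test Q, X => Q ∩ X
  | .choice a b, X => dglAngel a X ∪ dglAngel b X
  | .seq a b, X => dglAngel a (dglAngel b X)
  | .dual a, X => (dglAngel a Xᶜ)ᶜ
  | .star a, X => ⋂₀ {Z | X ∪ dglAngel a Z ⊆ Z}

/-- Demon's one-argument zero-sum dGL winning region δ_α(X) = (ς_α(Xᶜ))ᶜ. -/
def dglDemon (g : Game V) (X : Set (V → ℝ)) : Set (V → ℝ) :=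
  (dglAngel g Xᶜ)ᶜ

/-- Systematization α^{-d}: removes all dual operators. -/
def Game.sys : Game V → Game V
  | .assign x e => .assign x e
  | .ode x f Q => .ode x f Q
  | .test Q => .test Q
  | .choice a b => .choice a.sys b.sys
  | .seq a b => .seq a.sys b.sys
  | .dual a => a.sys
  | .star a => .star a.sys


lemma dglAngel_mono (g : Game V) {X Y : Set (V → ℝ)} (h : X ⊆ Y) :
    dglAngel g X ⊆ dglAngel g Y := by
  induction g generalizing X Y with
  | assign x e => exact fun ω hω => h hω
  | ode x f Q =>
      rintro ω ⟨r, φ, hs, h0, hr⟩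
      exact ⟨r, φ, hs, h0, h hr⟩
  | test Q => exact inter_subset_inter_right _ h
  | choice a b iha ihb => exact union_subset_union (iha h) (ihb h)
  | seq a b iha ihb => exact iha (ihb h)
  | dual a iha =>
      exact compl_subset_compl.mpr (iha (compl_subset_compl.mpr h))
  | star a iha =>
      apply sInter_subset_sInter
      intro Z hZ
      exact (union_subset_union_left _ h).trans hZ

lemma star_base (g : Game V) (X : Set (V → ℝ)) :
    X ⊆ ⋂₀ {Z | X ∪ dglAngel g Z ⊆ Z} := by
  intro ω hω Z hZ
  exact hZ (Or.inl hω)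

lemma star_fold (g : Game V) (X : Set (V → ℝ)) :
    dglAngel g (⋂₀ {Z | X ∪ dglAngel g Z ⊆ Z}) ⊆ ⋂₀ {Z | X ∪ dglAngel g Z ⊆ Z} := by
  intro ω hω Z hZ
  exact hZ (Or.inr (dglAngel_mono g (sInter_subset_of_mem hZ) hω))

lemma angel_union (g : Game V) (A B : Set (V → ℝ)) :
    dglAngel g (A ∪ B) ⊆ dglAngel g.sys A ∪ dglAngel g B := by
  induction g generalizing A B with
  | assign x e =>
      intro ω hω
      rcases hω with h | h
      · exact Or.inl h
      · exact Or.inr h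
  | ode x f Q =>
      rintro ω ⟨r, φ, hs, h0, hr⟩
      rcases hr with h | h
      · exact Or.inl ⟨r, φ, hs, h0, h⟩
      · exact Or.inr ⟨r, φ, hs, h0, h⟩
  | test Q =>
      rintro ω ⟨hQ, h | h⟩
      · exact Or.inl ⟨hQ, h⟩
      · exact Or.inr ⟨hQ, h⟩
  | choice a b iha ihb =>
      intro ω hω
      rcases hω with h | h
      · rcases iha A B h with h' | h'
        · exact Or.inl (Or.inl h')
        · exact Or.inr (Or.inl h')
      · rcases ihb A B h with h' | h'
        · exact Or.inl (Or.inr h')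
        · exact Or.inr (Or.inr h')
  | seq a b iha ihb =>
      intro ω hω
      have h1 : ω ∈ dglAngel a (dglAngel b.sys A ∪ dglAngel b B) :=
        dglAngel_mono a (ihb A B) hω
      exact iha _ _ h1
  | dual a iha =>
      intro ω hω
      by_cases hA : ω ∈ dglAngel a.sys A
      · exact Or.inl hA
      · refine Or.inr ?_
        intro hB
        have hsub : Bᶜ ⊆ A ∪ (A ∪ B)ᶜ := by
          intro ω' hω'
          by_cases h' : ω' ∈ A
          · exact Or.inl h'
          · exact Or.inr (fun h'' => h''.elim h' hω')
        have := iha A (A ∪ B)ᶜ (dglAngel_mono a hsub hB)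
        rcases this with h | h
        · exact hA h
        · exact hω h
  | star a iha =>
      have hW : (A ∪ B) ∪
          dglAngel a (⋂₀ {Z | A ∪ dglAngel a.sys Z ⊆ Z} ∪ ⋂₀ {Z | B ∪ dglAngel a Z ⊆ Z}) ⊆
          ⋂₀ {Z | A ∪ dglAngel a.sys Z ⊆ Z} ∪ ⋂₀ {Z | B ∪ dglAngel a Z ⊆ Z} := by
        apply union_subset
        · exact union_subset_union (star_base a.sys A) (star_base a B)
        · refine (iha _ _).trans ?_
          exact union_subset_union (star_fold a.sys A) (star_fold a B)
      exact sInter_subset_of_mem hW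

lemma demon_union (g : Game V) (A B : Set (V → ℝ)) :
    dglDemon g (A ∪ B) ⊆ dglAngel g.sys A ∪ dglDemon g B := by
  intro ω hω
  by_cases hA : ω ∈ dglAngel g.sys A
  · exact Or.inl hA
  · refine Or.inr ?_
    intro hB
    have hsub : Bᶜ ⊆ A ∪ (A ∪ B)ᶜ := by
      intro ω' hω'
      by_cases h' : ω' ∈ A
      · exact Or.inl h'
      · exact Or.inr (fun h'' => h''.elim h' hω')
    rcases angel_union g A (A ∪ B)ᶜ (dglAngel_mono g hsub hB) with h | h
    · exact hA h
    · exact hω h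

/-- Sequential cooperation inclusion for Demon:
`δ_α(ς_{β^{-d}}(X ∩ Y) ∪ δ_β(Y)) ∩ (δ_α(δ_β(Y)))ᶜ ⊆ ς_{α^{-d}}(ς_{β^{-d}}(X ∩ Y))`. -/
theorem seq_cooperation_incl_demon (α β : Game V) (X Y : Set (V → ℝ)) :
    dglDemon α (dglAngel β.sys (X ∩ Y) ∪ dglDemon β Y) ∩ (dglDemon α (dglDemon β Y))ᶜ ⊆
      dglAngel α.sys (dglAngel β.sys (X ∩ Y)) := by
  rintro ω ⟨h1, h2⟩
  rcases demon_union α (dglAngel β.sys (X ∩ Y)) (dglDemon β Y) h1 with h | h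
  · exact h
  · exact absurd h h2
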